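/- Suppose the family (y_i)_{i∈ι} of vectors y_i ∈ ℂ^{k} solves the compressed system, i.e., Ã_i y_i + Σ_{j≠i} R_{ij} y_j = f̃_i for every i ∈ ι, and define x_i := A_i^{-1} f_i − A_i^{-1} U_i f̃_i + A_i^{-1} U_i Ã_i y_i for every i. Then (1) V_i x_i = y_i for every i ∈ ι, and (2) the family (x_i)_{i∈ι} solves the original system: A_i x_i + Σ_{j≠i} U_i R_{ij} V_j x_j = f_i for every i ∈ ι. -/

import Mathlib

open Matrix

/-!
Write `B = A⁻¹`, `S = (V B U)⁻¹` and `x = B f - B U S (V B f) + B U S y`. Applying `V` gives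
`V B f - (V B U S)(V B f) + (V B U S) y = y`, since `V B U S = 1`. Applying `A` gives
`A x = f - U (f̃ - S y)`, while, once `V j x j = y j` is known, the coupling term is
`∑ U R V x = U ∑ R y = U (f̃ - S y)` by the compressed system; the two cancel.
-/

section Recovery

variable {m n p α : Type*} [Fintype n] [Fintype p] [Ring α]

theorem mulVec_recovery (C : Matrix m n α) (B : Matrix n n α) (U : Matrix n p α)
    (S : Matrix p p α) (f : n → α) (z y : p → α) :
    C *ᵥ (B *ᵥ f - (B * U) *ᵥ z + (B * U * S) *ᵥ y)
      = (C * B) *ᵥ f - (C * B * U) *ᵥ z + (C * B * U * S) *ᵥ y := by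
  simp only [mulVec_add, mulVec_sub, mulVec_mulVec, Matrix.mul_assoc]

theorem mulVec_recovery_of_compression_inv [DecidableEq p] {V : Matrix p n α}
    {B : Matrix n n α} {U : Matrix n p α} {S : Matrix p p α}
    (h : V * B * U * S = 1) (f : n → α) (y : p → α) :
    V *ᵥ (B *ᵥ f - (B * U) *ᵥ (S *ᵥ ((V * B) *ᵥ f)) + (B * U * S) *ᵥ y) = y := by
  rw [mulVec_recovery, mulVec_mulVec, h, one_mulVec, one_mulVec, sub_self, zero_add]

theorem mulVec_recovery_of_right_inv [DecidableEq n] {A B : Matrix n n α} (h : A * B = 1)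
    (U : Matrix n p α) (S : Matrix p p α) (f : n → α) (z y : p → α) :
    A *ᵥ (B *ᵥ f - (B * U) *ᵥ z + (B * U * S) *ᵥ y) = f - U *ᵥ (z - S *ᵥ y) := by
  rw [mulVec_recovery, h, one_mulVec, Matrix.one_mul, ← mulVec_mulVec, mulVec_sub]
  abel

end Recovery

theorem sum_mul_mul_mulVec {ι m n p α : Type*} [Fintype n] [Fintype p] [NonUnitalSemiring α]
    (s : Finset ι) (U : Matrix m p α) (R : ι → Matrix p p α) (V : ι → Matrix p n α)
    (x : ι → n → α) :
    ∑ j ∈ s, (U * R j * V j) *ᵥ x j = U *ᵥ ∑ j ∈ s, R j *ᵥ (V j *ᵥ x j) := by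
  simp only [mulVec_sum, mulVec_mulVec, Matrix.mul_assoc]

theorem downward_step_correct_general {ι : Type*} [Fintype ι] [DecidableEq ι] {n k : ℕ}
    (A : ι → Matrix (Fin n) (Fin n) ℂ)
    (U : ι → Matrix (Fin n) (Fin k) ℂ)
    (V : ι → Matrix (Fin k) (Fin n) ℂ)
    (R : ι → ι → Matrix (Fin k) (Fin k) ℂ)
    (f : ι → Fin n → ℂ)
    (hA : ∀ i, IsUnit (A i))
    (hVAU : ∀ i, IsUnit (V i * (A i)⁻¹ * U i))
    (y : ι → Fin k → ℂ)
    (hy : ∀ i, (V i * (A i)⁻¹ * U i)⁻¹ *ᵥ y i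
        + ∑ j ∈ Finset.univ.erase i, R i j *ᵥ y j
      = (V i * (A i)⁻¹ * U i)⁻¹ *ᵥ ((V i * (A i)⁻¹) *ᵥ f i))
    (x : ι → Fin n → ℂ)
    (hx : ∀ i, x i = (A i)⁻¹ *ᵥ f i
        - ((A i)⁻¹ * U i) *ᵥ
            ((V i * (A i)⁻¹ * U i)⁻¹ *ᵥ ((V i * (A i)⁻¹) *ᵥ f i))
        + ((A i)⁻¹ * U i * (V i * (A i)⁻¹ * U i)⁻¹) *ᵥ y i) :
    (∀ i, V i *ᵥ x i = y i) ∧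
      (∀ i, A i *ᵥ x i
          + ∑ j ∈ Finset.univ.erase i, (U i * R i j * V j) *ᵥ x j = f i) := by
  have hVx (i : ι) : V i *ᵥ x i = y i := by
    rw [hx i, mulVec_recovery_of_compression_inv
      (mul_nonsing_inv _ ((isUnit_iff_isUnit_det _).mp (hVAU i)))]
  refine ⟨hVx, fun i => ?_⟩
  have hcoupling : ∑ j ∈ Finset.univ.erase i, R i j *ᵥ y j
      = (V i * (A i)⁻¹ * U i)⁻¹ *ᵥ ((V i * (A i)⁻¹) *ᵥ f i)
        - (V i * (A i)⁻¹ * U i)⁻¹ *ᵥ y i :=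
    eq_sub_of_add_eq' (hy i)
  rw [sum_mul_mul_mulVec, hx i, mulVec_recovery_of_right_inv
    (mul_nonsing_inv _ ((isUnit_iff_isUnit_det _).mp (hA i)))]
  simp only [hVx, hcoupling, sub_add_cancel]

/-- Correctness of the downward step of the Martinsson–Rokhlin-type fast direct solver:
if `(y i)` solves the compressed system and `x i` is defined by the downward recovery
formula, then `V i *ᵥ x i = y i` and `(x i)` solves the original system.
Here `Ã i = (V i * (A i)⁻¹ * U i)⁻¹` and `f̃ i = Ã i *ᵥ (V i * (A i)⁻¹ *ᵥ f i)`. -/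
theorem downward_step_correct {ι : Type*} [Fintype ι] [DecidableEq ι] {n k : ℕ}
    (hn : 0 < n) (hk : 0 < k)
    (A : ι → Matrix (Fin n) (Fin n) ℂ)
    (U : ι → Matrix (Fin n) (Fin k) ℂ)
    (V : ι → Matrix (Fin k) (Fin n) ℂ)
    (R : ι → ι → Matrix (Fin k) (Fin k) ℂ)
    (f : ι → Fin n → ℂ)
    (hA : ∀ i, IsUnit (A i))
    (hVAU : ∀ i, IsUnit (V i * (A i)⁻¹ * U i))
    (y : ι → Fin k → ℂ)
    (hy : ∀ i, (V i * (A i)⁻¹ * U i)⁻¹ *ᵥ y i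
        + ∑ j ∈ Finset.univ.erase i, R i j *ᵥ y j
      = (V i * (A i)⁻¹ * U i)⁻¹ *ᵥ ((V i * (A i)⁻¹) *ᵥ f i))
    (x : ι → Fin n → ℂ)
    (hx : ∀ i, x i = (A i)⁻¹ *ᵥ f i
        - ((A i)⁻¹ * U i) *ᵥ
            ((V i * (A i)⁻¹ * U i)⁻¹ *ᵥ ((V i * (A i)⁻¹) *ᵥ f i))
        + ((A i)⁻¹ * U i * (V i * (A i)⁻¹ * U i)⁻¹) *ᵥ y i) :
    (∀ i, V i *ᵥ x i = y i) ∧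
      (∀ i, A i *ᵥ x i
          + ∑ j ∈ Finset.univ.erase i, (U i * R i j * V j) *ᵥ x j = f i) :=
  downward_step_correct_general A U V R f hA hVAU y hy x hx
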